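/- Let H = H_A ⊗ H_B with η = η_A ⊗ η_B, η_A and η_B Hermitian invertible. Define X₁ = (X + η⁻¹X†η)/2 and X₂ = i(η⁻¹X†η − X)/2. Then tr_B(X) is η_A-pseudo-Hermitian and tr_A(X) is η_B-pseudo-Hermitian if and only if X = X₁ + i X₂ with X₁, X₂ both η-pseudo-Hermitian and tr_B(X₂) = 0 and tr_A(X₂) = 0. -/

import Mathlib

open Matrix Kronecker

/-- Partial trace over the second tensor factor. -/
noncomputable def trB {α β : Type*} [Fintype β]
    (X : Matrix (α × β) (α × β) ℂ) : Matrix α α ℂ :=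
  Matrix.of fun a a' => ∑ b : β, X (a, b) (a', b)

/-- Partial trace over the first tensor factor. -/
noncomputable def trA {α β : Type*} [Fintype α]
    (X : Matrix (α × β) (α × β) ℂ) : Matrix β β ℂ :=
  Matrix.of fun b b' => ∑ a : α, X (a, b) (a, b')

/-!
Let `X♯ := η⁻¹ Xᴴ η` (`pseudoAdjoint η X`), the adjoint for the form `(x, y) ↦ xᴴ η y`; a matrix
is `η`-pseudo-Hermitian iff `X♯ = X`. For Hermitian invertible `η` the map `♯` is a
conjugate-linear involution, so `X₁ = (X + X♯)/2` and `X₂ = i(X♯ - X)/2` are its real and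
imaginary parts: always `♯`-fixed, with `X = X₁ + i X₂`. For `η = η_A ⊗ η_B`, writing
`η_A ⊗ η_B = (η_A ⊗ 1)(1 ⊗ η_B)` and using that `tr_B` is cyclic in the second factor gives
`tr_B (X♯) = (tr_B X)♯`, and likewise for `tr_A`. Hence `tr_B X₂ = i((tr_B X)♯ - tr_B X)/2`
vanishes exactly when `tr_B X` is `η_A`-pseudo-Hermitian.
-/

section PseudoAdjoint

variable {n R : Type*} [Fintype n] [DecidableEq n] [CommRing R] [StarRing R]

noncomputable def pseudoAdjoint (η X : Matrix n n R) : Matrix n n R := η⁻¹ * Xᴴ * η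

lemma pseudoAdjoint_add (η X Y : Matrix n n R) :
    pseudoAdjoint η (X + Y) = pseudoAdjoint η X + pseudoAdjoint η Y := by
  simp [pseudoAdjoint, Matrix.mul_add, Matrix.add_mul]

lemma pseudoAdjoint_sub (η X Y : Matrix n n R) :
    pseudoAdjoint η (X - Y) = pseudoAdjoint η X - pseudoAdjoint η Y := by
  simp [pseudoAdjoint, Matrix.mul_sub, Matrix.sub_mul]

lemma pseudoAdjoint_smul (η X : Matrix n n R) (c : R) :
    pseudoAdjoint η (c • X) = star c • pseudoAdjoint η X := by
  simp [pseudoAdjoint]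

lemma pseudoAdjoint_pseudoAdjoint {η : Matrix n n R} (hη : η.IsHermitian) (hdet : IsUnit η.det)
    (X : Matrix n n R) : pseudoAdjoint η (pseudoAdjoint η X) = X := by
  simp [pseudoAdjoint, conjTranspose_nonsing_inv, hη.eq, Matrix.mul_assoc, hdet]

lemma conjTranspose_eq_mul_mul_inv_iff {η : Matrix n n R} (hdet : IsUnit η.det)
    (X : Matrix n n R) : Xᴴ = η * X * η⁻¹ ↔ pseudoAdjoint η X = X := by
  constructor
  · intro h
    simp [pseudoAdjoint, h, Matrix.mul_assoc, hdet]
  · intro h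
    calc Xᴴ = η * pseudoAdjoint η X * η⁻¹ := by simp [pseudoAdjoint, Matrix.mul_assoc, hdet]
      _ = η * X * η⁻¹ := by rw [h]

lemma pseudoAdjoint_smul_add_self {η : Matrix n n R} (hη : η.IsHermitian) (hdet : IsUnit η.det)
    {c : R} (hc : star c = c) (X : Matrix n n R) :
    pseudoAdjoint η (c • (X + pseudoAdjoint η X)) = c • (X + pseudoAdjoint η X) := by
  rw [pseudoAdjoint_smul, pseudoAdjoint_add, pseudoAdjoint_pseudoAdjoint hη hdet, hc, add_comm]

lemma pseudoAdjoint_smul_sub_self {η : Matrix n n R} (hη : η.IsHermitian) (hdet : IsUnit η.det)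
    {c : R} (hc : star c = -c) (X : Matrix n n R) :
    pseudoAdjoint η (c • (pseudoAdjoint η X - X)) = c • (pseudoAdjoint η X - X) := by
  rw [pseudoAdjoint_smul, pseudoAdjoint_sub, pseudoAdjoint_pseudoAdjoint hη hdet, hc, neg_smul,
    ← smul_neg, neg_sub]

end PseudoAdjoint

lemma inv_two_smul_add_add_I_smul_inv_two_smul_I_smul_sub {M : Type*} [AddCommGroup M]
    [Module ℂ M] (x y : M) :
    (2 : ℂ)⁻¹ • (x + y) + Complex.I • ((2 : ℂ)⁻¹ • (Complex.I • (y - x))) = x := by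
  match_scalars
  · linear_combination (-(2 : ℂ)⁻¹) * Complex.I_mul_I
  · linear_combination (2 : ℂ)⁻¹ * Complex.I_mul_I

section PartialTrace

variable {α β : Type*}

lemma trB_smul [Fintype β] (c : ℂ) (M : Matrix (α × β) (α × β) ℂ) : trB (c • M) = c • trB M := by
  ext a a'
  simp [trB, Finset.mul_sum]

lemma trA_smul [Fintype α] (c : ℂ) (M : Matrix (α × β) (α × β) ℂ) : trA (c • M) = c • trA M := by
  ext b b'
  simp [trA, Finset.mul_sum]

lemma trB_sub [Fintype β] (M N : Matrix (α × β) (α × β) ℂ) : trB (M - N) = trB M - trB N := by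
  ext a a'
  simp [trB]

lemma trA_sub [Fintype α] (M N : Matrix (α × β) (α × β) ℂ) : trA (M - N) = trA M - trA N := by
  ext b b'
  simp [trA]

lemma trB_conjTranspose [Fintype β] (M : Matrix (α × β) (α × β) ℂ) : trB Mᴴ = (trB M)ᴴ := by
  ext a a'
  simp [trB, conjTranspose_apply]

lemma trA_conjTranspose [Fintype α] (M : Matrix (α × β) (α × β) ℂ) : trA Mᴴ = (trA M)ᴴ := by
  ext b b'
  simp [trA, conjTranspose_apply]

variable [Fintype α] [Fintype β]

lemma trB_kronecker_one_mul [DecidableEq β] (P : Matrix α α ℂ) (M : Matrix (α × β) (α × β) ℂ) :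
    trB ((P ⊗ₖ 1) * M) = P * trB M := by
  ext a a'
  simp only [trB, of_apply, mul_apply, kroneckerMap_apply, one_apply, mul_ite, mul_one, mul_zero,
    ite_mul, zero_mul, Fintype.sum_prod_type, Finset.sum_ite_eq, Finset.mem_univ, if_true,
    Finset.mul_sum]
  exact Finset.sum_comm

lemma trB_mul_kronecker_one [DecidableEq β] (R : Matrix α α ℂ) (M : Matrix (α × β) (α × β) ℂ) :
    trB (M * (R ⊗ₖ 1)) = trB M * R := by
  ext a a'
  simp only [trB, of_apply, mul_apply, kroneckerMap_apply, one_apply, mul_ite, mul_one, mul_zero,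
    Fintype.sum_prod_type, Finset.sum_ite_eq', Finset.mem_univ, if_true, Finset.sum_mul]
  exact Finset.sum_comm

lemma trA_one_kronecker_mul [DecidableEq α] (Q : Matrix β β ℂ) (M : Matrix (α × β) (α × β) ℂ) :
    trA ((1 ⊗ₖ Q) * M) = Q * trA M := by
  ext b b'
  simp only [trA, of_apply, mul_apply, kroneckerMap_apply, one_apply, ite_mul, one_mul, zero_mul,
    Fintype.sum_prod_type, Finset.sum_ite_irrel, Finset.sum_const_zero, Finset.sum_ite_eq,
    Finset.mem_univ, if_true, Finset.mul_sum]
  exact Finset.sum_comm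

lemma trA_mul_one_kronecker [DecidableEq α] (S : Matrix β β ℂ) (M : Matrix (α × β) (α × β) ℂ) :
    trA (M * (1 ⊗ₖ S)) = trA M * S := by
  ext b b'
  simp only [trA, of_apply, mul_apply, kroneckerMap_apply, one_apply, ite_mul, one_mul, zero_mul,
    mul_ite, mul_zero, Fintype.sum_prod_type, Finset.sum_ite_irrel, Finset.sum_const_zero,
    Finset.sum_ite_eq', Finset.mem_univ, if_true, Finset.sum_mul]
  exact Finset.sum_comm

lemma trB_one_kronecker_mul [DecidableEq α] (Q : Matrix β β ℂ) (M : Matrix (α × β) (α × β) ℂ) :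
    trB ((1 ⊗ₖ Q) * M) = trB (M * (1 ⊗ₖ Q)) := by
  ext a a'
  simp only [trB, of_apply, mul_apply, kroneckerMap_apply, one_apply, ite_mul, one_mul, zero_mul,
    mul_ite, mul_zero, Fintype.sum_prod_type, Finset.sum_ite_irrel, Finset.sum_const_zero,
    Finset.sum_ite_eq, Finset.sum_ite_eq', Finset.mem_univ, if_true]
  rw [Finset.sum_comm]
  simp_rw [mul_comm]

lemma trA_kronecker_one_mul [DecidableEq β] (P : Matrix α α ℂ) (M : Matrix (α × β) (α × β) ℂ) :
    trA ((P ⊗ₖ 1) * M) = trA (M * (P ⊗ₖ 1)) := by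
  ext b b'
  simp only [trA, of_apply, mul_apply, kroneckerMap_apply, one_apply, mul_ite, mul_one, mul_zero,
    ite_mul, zero_mul, Fintype.sum_prod_type, Finset.sum_ite_eq, Finset.sum_ite_eq',
    Finset.mem_univ, if_true]
  rw [Finset.sum_comm]
  simp_rw [mul_comm]

lemma kronecker_eq_kronecker_one_mul_one_kronecker [DecidableEq α] [DecidableEq β]
    (P : Matrix α α ℂ) (Q : Matrix β β ℂ) : P ⊗ₖ Q = (P ⊗ₖ 1) * (1 ⊗ₖ Q) := by
  rw [← mul_kronecker_mul, mul_one, one_mul]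

lemma kronecker_eq_one_kronecker_mul_kronecker_one [DecidableEq α] [DecidableEq β]
    (P : Matrix α α ℂ) (Q : Matrix β β ℂ) : P ⊗ₖ Q = (1 ⊗ₖ Q) * (P ⊗ₖ 1) := by
  rw [← mul_kronecker_mul, mul_one, one_mul]

variable [DecidableEq α] [DecidableEq β]

lemma trB_kronecker_mul_mul_kronecker (P R : Matrix α α ℂ) {Q S : Matrix β β ℂ} (hSQ : S * Q = 1)
    (M : Matrix (α × β) (α × β) ℂ) : trB ((P ⊗ₖ Q) * M * (R ⊗ₖ S)) = P * trB M * R := by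
  calc trB ((P ⊗ₖ Q) * M * (R ⊗ₖ S))
      = trB ((P ⊗ₖ 1) * ((1 ⊗ₖ Q) * (M * (1 ⊗ₖ S))) * (R ⊗ₖ 1)) := by
        rw [kronecker_eq_kronecker_one_mul_one_kronecker P Q,
          kronecker_eq_one_kronecker_mul_kronecker_one R S]
        simp only [Matrix.mul_assoc]
    _ = P * trB (M * ((1 ⊗ₖ S) * (1 ⊗ₖ Q))) * R := by
        rw [trB_mul_kronecker_one, trB_kronecker_one_mul, trB_one_kronecker_mul, Matrix.mul_assoc M]
    _ = P * trB M * R := by rw [← mul_kronecker_mul, one_mul, hSQ, one_kronecker_one, mul_one]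

lemma trA_kronecker_mul_mul_kronecker {P R : Matrix α α ℂ} (Q S : Matrix β β ℂ) (hRP : R * P = 1)
    (M : Matrix (α × β) (α × β) ℂ) : trA ((P ⊗ₖ Q) * M * (R ⊗ₖ S)) = Q * trA M * S := by
  calc trA ((P ⊗ₖ Q) * M * (R ⊗ₖ S))
      = trA ((1 ⊗ₖ Q) * ((P ⊗ₖ 1) * (M * (R ⊗ₖ 1))) * (1 ⊗ₖ S)) := by
        rw [kronecker_eq_one_kronecker_mul_kronecker_one P Q,
          kronecker_eq_kronecker_one_mul_one_kronecker R S]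
        simp only [Matrix.mul_assoc]
    _ = Q * trA (M * ((R ⊗ₖ 1) * (P ⊗ₖ 1))) * S := by
        rw [trA_mul_one_kronecker, trA_one_kronecker_mul, trA_kronecker_one_mul, Matrix.mul_assoc M]
    _ = Q * trA M * S := by rw [← mul_kronecker_mul, one_mul, hRP, one_kronecker_one, mul_one]

lemma trB_pseudoAdjoint_kronecker (ηA : Matrix α α ℂ) {ηB : Matrix β β ℂ} (hB : IsUnit ηB.det)
    (X : Matrix (α × β) (α × β) ℂ) :
    trB (pseudoAdjoint (ηA ⊗ₖ ηB) X) = pseudoAdjoint ηA (trB X) := by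
  rw [pseudoAdjoint, inv_kronecker,
    trB_kronecker_mul_mul_kronecker _ _ (mul_nonsing_inv ηB hB), trB_conjTranspose, pseudoAdjoint]

lemma trA_pseudoAdjoint_kronecker {ηA : Matrix α α ℂ} (hA : IsUnit ηA.det) (ηB : Matrix β β ℂ)
    (X : Matrix (α × β) (α × β) ℂ) :
    trA (pseudoAdjoint (ηA ⊗ₖ ηB) X) = pseudoAdjoint ηB (trA X) := by
  rw [pseudoAdjoint, inv_kronecker,
    trA_kronecker_mul_mul_kronecker _ _ (mul_nonsing_inv ηA hA), trA_conjTranspose, pseudoAdjoint]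

end PartialTrace

/-- `tr_B X` and `tr_A X` are `η_A`- resp. `η_B`-pseudo-Hermitian iff
`X = X₁ + i X₂` with `X₁, X₂` both `(η_A ⊗ η_B)`-pseudo-Hermitian and
`tr_B X₂ = 0`, `tr_A X₂ = 0`, where `X₁ = (X + η⁻¹X†η)/2`,
`X₂ = i(η⁻¹X†η − X)/2`. -/
theorem partialTrace_pseudo_hermitian_iff {m k : ℕ}
    (ηA : Matrix (Fin m) (Fin m) ℂ) (ηB : Matrix (Fin k) (Fin k) ℂ)
    (hηA : ηA.IsHermitian) (hηB : ηB.IsHermitian)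
    (hA : IsUnit ηA.det) (hB : IsUnit ηB.det)
    (X : Matrix (Fin m × Fin k) (Fin m × Fin k) ℂ) :
    let η := ηA ⊗ₖ ηB
    let X₁ := (2 : ℂ)⁻¹ • (X + η⁻¹ * Xᴴ * η)
    let X₂ := (2 : ℂ)⁻¹ • (Complex.I • (η⁻¹ * Xᴴ * η - X))
    (((trB X)ᴴ = ηA * trB X * ηA⁻¹ ∧ (trA X)ᴴ = ηB * trA X * ηB⁻¹) ↔
      (X = X₁ + Complex.I • X₂ ∧
        X₁ᴴ = η * X₁ * η⁻¹ ∧ X₂ᴴ = η * X₂ * η⁻¹ ∧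
        trB X₂ = 0 ∧ trA X₂ = 0)) := by
  intro η X₁ X₂
  have hη : η.IsHermitian := by
    rw [IsHermitian, conjTranspose_kronecker, hηA.eq, hηB.eq]
  have hdet : IsUnit η.det := by
    rw [det_kronecker]
    exact (hA.pow _).mul (hB.pow _)
  have hX : X = X₁ + Complex.I • X₂ :=
    (inv_two_smul_add_add_I_smul_inv_two_smul_I_smul_sub X _).symm
  have hX₁ : X₁ᴴ = η * X₁ * η⁻¹ :=
    (conjTranspose_eq_mul_mul_inv_iff hdet _).2 (pseudoAdjoint_smul_add_self hη hdet (by simp) X)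
  have hX₂ : X₂ᴴ = η * X₂ * η⁻¹ := by
    have h := pseudoAdjoint_smul_sub_self hη hdet (c := (2 : ℂ)⁻¹ * Complex.I) (by simp) X
    rwa [← smul_smul, ← conjTranspose_eq_mul_mul_inv_iff hdet] at h
  have hc : (2 : ℂ)⁻¹ * Complex.I ≠ 0 := by simp
  have hsharp : η⁻¹ * Xᴴ * η = pseudoAdjoint (ηA ⊗ₖ ηB) X := rfl
  have htrB : (trB X)ᴴ = ηA * trB X * ηA⁻¹ ↔ trB X₂ = 0 := by
    rw [trB_smul, trB_smul, trB_sub, hsharp, trB_pseudoAdjoint_kronecker ηA hB, smul_smul,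
      smul_eq_zero, or_iff_right hc, sub_eq_zero, conjTranspose_eq_mul_mul_inv_iff hA]
  have htrA : (trA X)ᴴ = ηB * trA X * ηB⁻¹ ↔ trA X₂ = 0 := by
    rw [trA_smul, trA_smul, trA_sub, hsharp, trA_pseudoAdjoint_kronecker hA ηB, smul_smul,
      smul_eq_zero, or_iff_right hc, sub_eq_zero, conjTranspose_eq_mul_mul_inv_iff hB]
  rw [htrB, htrA]
  tauto
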